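/- Let P be a finite set with succ : P \to Finset P and a 1-valued edge labeling \lambda : edges \to {0,1}, and let d = max_p |succ(p)|. Define the bivariate polynomials F(x,y) = \sum_p \sum_{S \subseteq succ(p)} x^{corem(p,S)} y^{rem_1(p,S)} and H(x,y) = \sum_p x^{out(p)} y^{mrk_1(p)}. Then H(x,y) = (x-1)^d F(1/(x-1), (x(y-1)+1)/(x-1)) as an identity of rational functions over \mathbb{Q}. -/

import Mathlib

/-!
Expanding `∏_{q ∈ succ p} ((x - 1) + w_q)`, with `w_q = x(y - 1) + 1` for marked `q` and
`w_q = 1` otherwise, over the subsets `S` of `succ p` gives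
`∑_S (x - 1)^|S| (x(y - 1) + 1)^rem₁(p,S)`; each factor is `xy` or `x`, so the product is
`x^out(p) y^mrk₁(p)`. Multiplying the `S`-term of `F(1/(x-1), (x(y-1)+1)/(x-1))` by `(x - 1)^d`
cancels the denominators, since `corem + rem₁ + |S| = d`, and leaves exactly that summand.
-/

open Finset

lemma Finset.card_filter_sdiff {ι : Type*} [DecidableEq ι] {s t : Finset ι} (P : ι → Prop)
    [DecidablePred P] (h : t ⊆ s) : #((s \ t).filter P) = #(s.filter P) - #(t.filter P) := by
  have hfilter : (s \ t).filter P = s.filter P \ t.filter P := by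
    ext; simp only [mem_filter, mem_sdiff]; tauto
  rw [hfilter, card_sdiff_of_subset (filter_subset_filter P h)]

lemma Finset.sum_powerset_pow_card_mul_pow_card_filter_sdiff {ι R : Type*} [DecidableEq ι]
    [CommSemiring R] (s : Finset ι) (P : ι → Prop) [DecidablePred P] (u v : R) :
    ∑ t ∈ s.powerset, u ^ #t * v ^ #((s \ t).filter P) =
      (u + v) ^ #(s.filter P) * (u + 1) ^ #(s.filter (¬P ·)) := by
  calc ∑ t ∈ s.powerset, u ^ #t * v ^ #((s \ t).filter P)
      = ∏ i ∈ s, (u + if P i then v else 1) := by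
        rw [prod_add]
        refine sum_congr rfl fun t _ => ?_
        rw [prod_const, ← prod_filter, prod_const]
    _ = (u + v) ^ #(s.filter P) * (u + 1) ^ #(s.filter (¬P ·)) := by
        simp only [apply_ite (u + ·)]
        rw [prod_ite, prod_const, prod_const]

lemma pow_mul_one_div_pow_mul_div_pow_of_add_le {K : Type*} [Field K] {z : K} (hz : z ≠ 0)
    (w : K) {c r d : ℕ} (h : c + r ≤ d) :
    z ^ d * ((1 / z) ^ (d - c - r) * (w / z) ^ r) = z ^ c * w ^ r := by
  obtain ⟨e, rfl⟩ := Nat.exists_eq_add_of_le h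
  rw [show c + r + e - c - r = e by omega, div_pow, div_pow, one_pow, pow_add, pow_add]
  field_simp

lemma sum_powerset_eq_pow_card_mul_pow_card_filter {ι K : Type*} [Field K]
    (s : Finset ι) (P : ι → Prop) [DecidablePred P] {d : ℕ} (hs : #s ≤ d)
    {x : K} (y : K) (hx1 : x - 1 ≠ 0) :
    (x - 1) ^ d * ∑ t ∈ s.powerset,
        (1 / (x - 1)) ^ (d - #t - (#(s.filter P) - #(t.filter P))) *
          ((x * (y - 1) + 1) / (x - 1)) ^ (#(s.filter P) - #(t.filter P)) =
      x ^ #s * y ^ #(s.filter P) := by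
  classical
  have hcard : ∀ t ⊆ s, #t + (#(s.filter P) - #(t.filter P)) ≤ d := fun t ht => by
    have := card_filter_add_card_filter_not (s := t) P
    have := card_filter_add_card_filter_not (s := s) P
    have := card_le_card (filter_subset_filter P ht)
    have := card_le_card (filter_subset_filter (¬P ·) ht)
    omega
  calc _ = ∑ t ∈ s.powerset, (x - 1) ^ #t * (x * (y - 1) + 1) ^ #((s \ t).filter P) := by
        rw [mul_sum]
        refine sum_congr rfl fun t ht => ?_
        rw [mem_powerset] at ht
        rw [card_filter_sdiff P ht, pow_mul_one_div_pow_mul_div_pow_of_add_le hx1 _ (hcard t ht)]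
    _ = (x * y) ^ #(s.filter P) * x ^ #(s.filter (¬P ·)) := by
        rw [sum_powerset_pow_card_mul_pow_card_filter_sdiff, sub_add_cancel,
          show x - 1 + (x * (y - 1) + 1) = x * y by ring]
    _ = x ^ #s * y ^ #(s.filter P) := by
        rw [← card_filter_add_card_filter_not (s := s) P]
        ring

theorem stmt_4_general {α : Type*} [Fintype α]
    (succ : α → Finset α) (mark : α → α → Bool)
    (d : ℕ) (hd : ∀ p, (succ p).card ≤ d)
    (K : Type*) [Field K] (x y : K) (hx1 : x - 1 ≠ 0) :
    (∑ p : α, x ^ (succ p).card * y ^ ((succ p).filter fun q => mark p q = true).card) =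
      (x - 1) ^ d * ∑ p : α, ∑ S ∈ (succ p).powerset,
        (1 / (x - 1)) ^ (d - S.card -
            (((succ p).filter fun q => mark p q = true).card -
              (S.filter fun q => mark p q = true).card)) *
          ((x * (y - 1) + 1) / (x - 1)) ^
            (((succ p).filter fun q => mark p q = true).card -
              (S.filter fun q => mark p q = true).card) := by
  rw [mul_sum]
  exact sum_congr rfl fun p _ =>
    (sum_powerset_eq_pow_card_mul_pow_card_filter _ _ (hd p) y hx1).symm

/-- The inverse `H = (x-1)^d F(1/(x-1), (x(y-1)+1)/(x-1))` correspondence for a finite set `P`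
with successor sets and a `1`-valued (Boolean) edge marking, stated in a field where `x - 1`
is invertible (the field of rational functions `ℚ(x,y)`).  Here `out p = |succ p|`,
`mrk p` is the number of marked successors of `p`, and for `S ⊆ succ p`,
`rem₁(p,S) = mrk p - #{s ∈ S : (p,s) marked}` and `corem(p,S) = d - |S| - rem₁(p,S)`. -/
theorem stmt_4 {α : Type*} [Fintype α] [DecidableEq α]
    (succ : α → Finset α) (mark : α → α → Bool)
    (d : ℕ) (hd : ∀ p, (succ p).card ≤ d)
    (K : Type*) [Field K] (x y : K) (hx1 : x - 1 ≠ 0) :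
    (∑ p : α, x ^ (succ p).card * y ^ ((succ p).filter fun q => mark p q = true).card) =
      (x - 1) ^ d * ∑ p : α, ∑ S ∈ (succ p).powerset,
        (1 / (x - 1)) ^ (d - S.card -
            (((succ p).filter fun q => mark p q = true).card -
              (S.filter fun q => mark p q = true).card)) *
          ((x * (y - 1) + 1) / (x - 1)) ^
            (((succ p).filter fun q => mark p q = true).card -
              (S.filter fun q => mark p q = true).card) :=
  stmt_4_general succ mark d hd K x y hx1
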